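/- Let f be a standard feedback function whose state graph G_f contains t > 1 cycles/loops. If the initial state u lies in one of these cycles, then the GPO algorithm on (f,u) never visits any state belonging to any of the other cycles or loops. -/
import Mathlib


/-- The state map of an `n`-stage FSR with feedback function `f`. -/
def stateMap (n : ℕ) (f : (Fin n → ZMod 2) → ZMod 2) (x : Fin n → ZMod 2) :
    Fin n → ZMod 2 :=
  fun i => if h : i.val + 1 < n then x ⟨i.val + 1, h⟩ else f x

/-- A feedback function is standard if it does not depend on the coordinate `x_0`. -/
def IsStandard (n : ℕ) (f : (Fin n → ZMod 2) → ZMod 2) : Prop :=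
  ∀ x y : Fin n → ZMod 2, (∀ i : Fin n, i.val ≠ 0 → x i = y i) → f x = f y

/-- Shift the state `c` one step to the left, feeding in the new bit `b`. -/
def shiftIn (n : ℕ) (c : Fin n → ZMod 2) (b : ZMod 2) : Fin n → ZMod 2 :=
  fun i => if h : i.val + 1 < n then c ⟨i.val + 1, h⟩ else b

/-- One run of the Generalized Prefer-Opposite algorithm: the pair consists of the
current state after `t` steps and the list of all states visited so far.  From the
current state `c` the algorithm moves to `(c_1,...,c_{n-1}, 1 + f(c))` if that state
has not appeared before, and to `(c_1,...,c_{n-1}, f(c))` otherwise. -/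
def gpoRun (n : ℕ) (f : (Fin n → ZMod 2) → ZMod 2) (u : Fin n → ZMod 2) :
    ℕ → (Fin n → ZMod 2) × List (Fin n → ZMod 2)
  | 0 => (u, [u])
  | t + 1 =>
    let p := gpoRun n f u t
    let cand := shiftIn n p.1 (f p.1 + 1)
    let next := if cand ∈ p.2 then shiftIn n p.1 (f p.1) else cand
    (next, next :: p.2)

/-- The state of the GPO algorithm after `t` steps. -/
def gpoState (n : ℕ) (f : (Fin n → ZMod 2) → ZMod 2) (u : Fin n → ZMod 2) (t : ℕ) :
    Fin n → ZMod 2 :=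
  (gpoRun n f u t).1

/-- The GPO algorithm on input `(f, u)` visits the state `v` (before halting, i.e.
before the first return to the initial state `u`). -/
def gpoVisits (n : ℕ) (f : (Fin n → ZMod 2) → ZMod 2) (u v : Fin n → ZMod 2) : Prop :=
  ∃ t, gpoState n f u t = v ∧ ∀ t', 0 < t' → t' < t → gpoState n f u t' ≠ u

-- auxiliary defs
def pred0 (n : ℕ) (y : Fin n → ZMod 2) : Fin n → ZMod 2 :=
  fun j => if (j : ℕ) = 0 then 0 else y ⟨(j : ℕ) - 1, by omega⟩

def aval (n : ℕ) (f : (Fin n → ZMod 2) → ZMod 2) (y : Fin n → ZMod 2) : ZMod 2 :=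
  f (pred0 n y)

def flipLast (n : ℕ) (y : Fin n → ZMod 2) : Fin n → ZMod 2 :=
  fun j => if (j : ℕ) = n - 1 then y j + 1 else y j

def evenSt (n : ℕ) (hn : 1 ≤ n) (f : (Fin n → ZMod 2) → ZMod 2) (y : Fin n → ZMod 2) : Prop :=
  y ⟨n - 1, by omega⟩ = aval n f y

lemma zmod_ne : ∀ a b c : ZMod 2, a ≠ c → b ≠ c → a = b := by decide
lemma zmod_cases : ∀ a b c : ZMod 2, a = b ∨ a = c ∨ b = c := by decide
lemma zmod_addone : ∀ a : ZMod 2, a + 1 ≠ a := by decide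

section
variable {n : ℕ} {f : (Fin n → ZMod 2) → ZMod 2}

lemma aval_congr (hf : IsStandard n f) (e y : Fin n → ZMod 2)
    (h : ∀ j : Fin n, (j : ℕ) ≠ 0 → e j = pred0 n y j) : f e = aval n f y :=
  hf e (pred0 n y) h

lemma shiftIn_last (hn : 1 ≤ n) (c : Fin n → ZMod 2) (b : ZMod 2) :
    shiftIn n c b ⟨n - 1, by omega⟩ = b := by
  show dite _ _ _ = b
  rw [dif_neg]
  simp only []
  omega

lemma tail_shiftIn (c : Fin n → ZMod 2) (b : ZMod 2) (y : Fin n → ZMod 2)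
    (hy : shiftIn n c b = y) :
    ∀ j : Fin n, (j : ℕ) ≠ 0 → c j = pred0 n y j := by
  intro j hj
  have hjn : (j : ℕ) < n := j.isLt
  have h1 : pred0 n y j = y ⟨(j : ℕ) - 1, by omega⟩ := if_neg hj
  rw [h1, ← hy]
  show c j = dite _ _ _
  rw [dif_pos (show ((j : ℕ) - 1) + 1 < n by omega)]
  congr 1
  exact Fin.ext (by simp; omega)

lemma pred0_flipLast (y : Fin n → ZMod 2) : pred0 n (flipLast n y) = pred0 n y := by
  funext j
  unfold pred0
  by_cases hj : (j : ℕ) = 0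
  · rw [if_pos hj, if_pos hj]
  · rw [if_neg hj, if_neg hj]
    have hjn : (j : ℕ) < n := j.isLt
    show (if ((⟨(j : ℕ) - 1, by omega⟩ : Fin n) : ℕ) = n - 1 then _ else _) = _
    rw [if_neg]
    simp only []
    omega

lemma flipLast_last (hn : 1 ≤ n) (y : Fin n → ZMod 2) :
    flipLast n y ⟨n - 1, by omega⟩ = y ⟨n - 1, by omega⟩ + 1 := by
  show (if _ then _ else _) = _
  rw [if_pos rfl]

lemma shiftIn_flip (hn : 1 ≤ n) (c : Fin n → ZMod 2) (b : ZMod 2) :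
    shiftIn n c (b + 1) = flipLast n (shiftIn n c b) := by
  funext j
  have hjn : (j : ℕ) < n := j.isLt
  simp only [shiftIn, flipLast]
  by_cases hj : (j : ℕ) + 1 < n
  · rw [dif_pos hj, if_neg (by omega), dif_pos hj]
  · rw [dif_neg hj, if_pos (by omega), dif_neg hj]

lemma even_shiftIn (hn : 1 ≤ n) (hf : IsStandard n f) (c : Fin n → ZMod 2) :
    evenSt n hn f (shiftIn n c (f c)) := by
  unfold evenSt
  rw [shiftIn_last hn]
  exact aval_congr hf c _ (tail_shiftIn c (f c) _ rfl)

lemma odd_shiftIn (hn : 1 ≤ n) (hf : IsStandard n f) (c : Fin n → ZMod 2) :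
    ¬ evenSt n hn f (shiftIn n c (f c + 1)) := by
  unfold evenSt
  rw [shiftIn_last hn]
  have h : f c = aval n f (shiftIn n c (f c + 1)) :=
    aval_congr hf c _ (tail_shiftIn c (f c + 1) _ rfl)
  rw [← h]
  exact zmod_addone (f c)

lemma odd_flipLast (hn : 1 ≤ n) (hf : IsStandard n f) (y : Fin n → ZMod 2)
    (hy : evenSt n hn f y) : ¬ evenSt n hn f (flipLast n y) := by
  unfold evenSt at *
  rw [flipLast_last hn, hy]
  show ¬ (aval n f y + 1 = aval n f (flipLast n y))
  unfold aval
  rw [pred0_flipLast]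
  exact zmod_addone _

lemma even_stateMap (hn : 1 ≤ n) (hf : IsStandard n f) (v : Fin n → ZMod 2) :
    evenSt n hn f (stateMap n f v) :=
  even_shiftIn hn hf v

lemma even_iterate (hn : 1 ≤ n) (hf : IsStandard n f) (x : Fin n → ZMod 2) (p m : ℕ)
    (hp : 0 < p) (hx : (stateMap n f)^[p] x = x) :
    evenSt n hn f ((stateMap n f)^[m] x) := by
  have hk : stateMap n f ((stateMap n f)^[m + p - 1] x) = (stateMap n f)^[m] x := by
    rw [← Function.iterate_succ_apply' (stateMap n f) (m + p - 1) x]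
    rw [show (m + p - 1).succ = m + p by omega]
    rw [Function.iterate_add_apply, hx]
  rw [← hk]
  exact even_stateMap hn hf _

end

section
variable {n : ℕ} {f : (Fin n → ZMod 2) → ZMod 2} {u : Fin n → ZMod 2}

lemma gpoState_zero : gpoState n f u 0 = u := rfl

lemma gpo_step (t : ℕ) : gpoState n f u (t + 1) =
    if shiftIn n (gpoState n f u t) (f (gpoState n f u t) + 1) ∈ (gpoRun n f u t).2
    then shiftIn n (gpoState n f u t) (f (gpoState n f u t))
    else shiftIn n (gpoState n f u t) (f (gpoState n f u t) + 1) := rfl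

lemma gpoRun_snd_succ (t : ℕ) :
    (gpoRun n f u (t + 1)).2 = gpoState n f u (t + 1) :: (gpoRun n f u t).2 := rfl

lemma mem_gpoRun (t : ℕ) (x : Fin n → ZMod 2) :
    x ∈ (gpoRun n f u t).2 ↔ ∃ s, s ≤ t ∧ gpoState n f u s = x := by
  induction t with
  | zero =>
    show x ∈ [u] ↔ _
    simp only [List.mem_singleton]
    constructor
    · intro h; exact ⟨0, le_refl 0, h.symm⟩
    · rintro ⟨s, hs, h⟩
      rw [Nat.le_zero] at hs
      subst hs; exact h.symm
  | succ t ih =>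
    rw [gpoRun_snd_succ, List.mem_cons, ih]
    constructor
    · rintro (h | ⟨s, hs, h⟩)
      · exact ⟨t + 1, le_refl _, h.symm⟩
      · exact ⟨s, by omega, h⟩
    · rintro ⟨s, hs, h⟩
      by_cases hst : s = t + 1
      · subst hst; exact Or.inl h.symm
      · exact Or.inr ⟨s, by omega, h⟩

variable (hn : 1 ≤ n) (hf : IsStandard n f)
include hf

lemma even_entry (t : ℕ) (h : evenSt n hn f (gpoState n f u (t + 1))) :
    gpoState n f u (t + 1) = shiftIn n (gpoState n f u t) (f (gpoState n f u t)) ∧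
    shiftIn n (gpoState n f u t) (f (gpoState n f u t) + 1) ∈ (gpoRun n f u t).2 := by
  by_cases hc : shiftIn n (gpoState n f u t) (f (gpoState n f u t) + 1) ∈ (gpoRun n f u t).2
  · exact ⟨by rw [gpo_step, if_pos hc], hc⟩
  · exfalso
    apply odd_shiftIn hn hf (gpoState n f u t)
    rw [gpo_step, if_neg hc] at h
    exact h

lemma odd_entry (t : ℕ) (h : ¬ evenSt n hn f (gpoState n f u (t + 1))) :
    gpoState n f u (t + 1) = shiftIn n (gpoState n f u t) (f (gpoState n f u t) + 1) ∧
    gpoState n f u (t + 1) ∉ (gpoRun n f u t).2 := by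
  by_cases hc : shiftIn n (gpoState n f u t) (f (gpoState n f u t) + 1) ∈ (gpoRun n f u t).2
  · exfalso
    apply h
    rw [gpo_step, if_pos hc]
    exact even_shiftIn hn hf _
  · refine ⟨by rw [gpo_step, if_neg hc], ?_⟩
    rw [gpo_step, if_neg hc]
    exact hc

lemma odd_unique (q : Fin n → ZMod 2) (hq : ¬ evenSt n hn f q) (r₁ r₂ : ℕ)
    (h₁ : gpoState n f u r₁ = q) (h₂ : gpoState n f u r₂ = q) (hlt : r₁ < r₂) : False := by
  obtain ⟨e, rfl⟩ : ∃ e, r₂ = e + 1 := ⟨r₂ - 1, by omega⟩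
  have := (odd_entry hn hf e (h₂ ▸ hq)).2
  exact this ((mem_gpoRun e _).2 ⟨r₁, by omega, h₂ ▸ h₁⟩)

omit hf in
lemma st_ext (P P' q : Fin n → ZMod 2)
    (h1 : ∀ j : Fin n, (j : ℕ) ≠ 0 → P j = q j)
    (h2 : ∀ j : Fin n, (j : ℕ) ≠ 0 → P' j = q j)
    (h0 : P ⟨0, by omega⟩ = P' ⟨0, by omega⟩) : P = P' := by
  funext j
  by_cases hj : (j : ℕ) = 0
  · have : j = (⟨0, by omega⟩ : Fin n) := Fin.ext hj
    rw [this]; exact h0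
  · rw [h1 j hj, h2 j hj]

lemma no_repeat (hu_even : evenSt n hn f u) (T : ℕ)
    (hT : ∀ t', 0 < t' → t' < T → gpoState n f u t' ≠ u) :
    ∀ t₂, t₂ < T → ∀ t₁, t₁ < t₂ → gpoState n f u t₁ = gpoState n f u t₂ → False := by
  intro t₂
  induction t₂ using Nat.strong_induction_on with
  | _ t₂ IH =>
    intro hT2 t₁ h12 heq
    by_cases hq : evenSt n hn f (gpoState n f u t₂)
    · rcases Nat.eq_zero_or_pos t₁ with h0 | hpos
      · subst h0
        exact hT t₂ h12 hT2 (heq ▸ (gpoState_zero (n := n) (f := f) (u := u)))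
      · obtain ⟨a, rfl⟩ : ∃ a, t₁ = a + 1 := ⟨t₁ - 1, by omega⟩
        obtain ⟨b, rfl⟩ : ∃ b, t₂ = b + 1 := ⟨t₂ - 1, by omega⟩
        obtain ⟨eqa, mema⟩ := even_entry hn hf a (heq ▸ hq)
        obtain ⟨eqb, memb⟩ := even_entry hn hf b hq
        -- flipLast q is in list a
        have hfq : shiftIn n (gpoState n f u a) (f (gpoState n f u a) + 1)
            = flipLast n (gpoState n f u (b + 1)) := by
          rw [shiftIn_flip hn, ← eqa, heq]
        have hodd : ¬ evenSt n hn f (flipLast n (gpoState n f u (b + 1))) :=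
          odd_flipLast hn hf _ hq
        obtain ⟨r, hr, hrv⟩ := (mem_gpoRun a _).1 mema
        rw [hfq] at hrv
        have hr0 : r ≠ 0 := by
          intro h0
          subst h0
          exact hodd (hrv ▸ hu_even)
        obtain ⟨e, rfl⟩ : ∃ e, r = e + 1 := ⟨r - 1, by omega⟩
        obtain ⟨eqe, _⟩ := odd_entry hn hf e (hrv ▸ hodd)
        -- tails
        have ha : ∀ j : Fin n, (j : ℕ) ≠ 0 →
            gpoState n f u a j = pred0 n (gpoState n f u (b + 1)) j :=
          tail_shiftIn _ _ _ (by rw [← eqa, heq])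
        have hb : ∀ j : Fin n, (j : ℕ) ≠ 0 →
            gpoState n f u b j = pred0 n (gpoState n f u (b + 1)) j :=
          tail_shiftIn _ _ _ eqb.symm
        have he : ∀ j : Fin n, (j : ℕ) ≠ 0 →
            gpoState n f u e j = pred0 n (gpoState n f u (b + 1)) j := by
          have h' := tail_shiftIn _ _ _ (by rw [← eqe, hrv] :
            shiftIn n (gpoState n f u e) (f (gpoState n f u e) + 1)
              = flipLast n (gpoState n f u (b + 1)))
          rw [pred0_flipLast] at h'
          exact h'
        have hea : e < a := by omega
        rcases zmod_cases (gpoState n f u a ⟨0, by omega⟩) (gpoState n f u b ⟨0, by omega⟩)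
          (gpoState n f u e ⟨0, by omega⟩) with h | h | h
        · exact IH b (by omega) (by omega) a (by omega) (st_ext hn _ _ _ ha hb h)
        · exact IH a (by omega) (by omega) e hea (st_ext hn _ _ _ he ha h.symm)
        · exact IH b (by omega) (by omega) e (by omega) (st_ext hn _ _ _ he hb h.symm)
    · exact odd_unique hn hf _ hq t₁ t₂ heq rfl h12

end

theorem gpo_avoids_other_cycles' (n : ℕ) (hn : 1 ≤ n)
    (f : (Fin n → ZMod 2) → ZMod 2) (hf : IsStandard n f) (u : Fin n → ZMod 2)
    (x₁ x₂ : Fin n → ZMod 2) (p₁ p₂ : ℕ) (hp₁ : 0 < p₁) (hp₂ : 0 < p₂)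
    (hx₁ : (stateMap n f)^[p₁] x₁ = x₁) (hx₂ : (stateMap n f)^[p₂] x₂ = x₂)
    (hu : ∃ m, (stateMap n f)^[m] x₁ = u)
    (hdisj : ∀ y, (∃ m, (stateMap n f)^[m] x₁ = y) →
      (∃ m, (stateMap n f)^[m] x₂ = y) → False) :
    ∀ y, (∃ m, (stateMap n f)^[m] x₂ = y) → ¬ (∃ t, gpoState n f u t = y ∧
      ∀ t', 0 < t' → t' < t → gpoState n f u t' ≠ u) := by
  rintro y ⟨m₂, hm₂⟩ ⟨T, hTy, hT⟩
  classical
  obtain ⟨m₁, hm₁⟩ := hu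
  have hu_even : evenSt n hn f u := hm₁ ▸ even_iterate hn hf x₁ p₁ m₁ hp₁ hx₁
  have hP : ∃ t, ∃ m, (stateMap n f)^[m] x₂ = gpoState n f u t :=
    ⟨T, m₂, by rw [hTy]; exact hm₂⟩
  set t := Nat.find hP with htdef
  have hts : ∃ m, (stateMap n f)^[m] x₂ = gpoState n f u t := Nat.find_spec hP
  have htT : t ≤ T := Nat.find_le ⟨m₂, by rw [hTy]; exact hm₂⟩
  have ht0 : t ≠ 0 := by
    intro h0
    obtain ⟨m, hm⟩ := hts
    rw [h0] at hm
    exact hdisj u ⟨m₁, hm₁⟩ ⟨m, hm⟩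
  obtain ⟨k, hk⟩ : ∃ k, t = k + 1 := ⟨t - 1, by omega⟩
  obtain ⟨m, hm⟩ := hts
  have hy₀ : evenSt n hn f (gpoState n f u t) := hm ▸ even_iterate hn hf x₂ p₂ m hp₂ hx₂
  rw [hk] at hy₀ hm
  obtain ⟨eqk, memk⟩ := even_entry hn hf k hy₀
  have hkw : stateMap n f ((stateMap n f)^[m + p₂ - 1] x₂) = gpoState n f u (k + 1) := by
    rw [← Function.iterate_succ_apply' (stateMap n f) (m + p₂ - 1) x₂,
        show (m + p₂ - 1).succ = m + p₂ by omega,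
        Function.iterate_add_apply, hx₂, hm]
  set w := (stateMap n f)^[m + p₂ - 1] x₂ with hwdef
  have hwtail : ∀ j : Fin n, (j : ℕ) ≠ 0 → w j = pred0 n (gpoState n f u (k + 1)) j :=
    tail_shiftIn _ _ _ hkw
  have hctail : ∀ j : Fin n, (j : ℕ) ≠ 0 →
      gpoState n f u k j = pred0 n (gpoState n f u (k + 1)) j :=
    tail_shiftIn _ _ _ eqk.symm
  have hflip : shiftIn n (gpoState n f u k) (f (gpoState n f u k) + 1)
      = flipLast n (gpoState n f u (k + 1)) := by rw [shiftIn_flip hn, ← eqk]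
  rw [hflip] at memk
  have hodd : ¬ evenSt n hn f (flipLast n (gpoState n f u (k + 1))) :=
    odd_flipLast hn hf _ hy₀
  obtain ⟨s, hs, hsv⟩ := (mem_gpoRun k _).1 memk
  have hs0 : s ≠ 0 := by
    intro h0
    subst h0
    exact hodd (hsv ▸ hu_even)
  obtain ⟨e, rfl⟩ : ∃ e, s = e + 1 := ⟨s - 1, by omega⟩
  obtain ⟨eqe, -⟩ := odd_entry hn hf e (hsv ▸ hodd)
  have hetail : ∀ j : Fin n, (j : ℕ) ≠ 0 →
      gpoState n f u e j = pred0 n (gpoState n f u (k + 1)) j := by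
    have h' := tail_shiftIn (gpoState n f u e) (f (gpoState n f u e) + 1) _
      (eqe.symm.trans hsv)
    rw [pred0_flipLast] at h'
    exact h'
  have hknotC : gpoState n f u k ≠ w := by
    intro hcontra
    exact Nat.find_min hP (show k < t by omega) ⟨m + p₂ - 1, hcontra.symm⟩
  have henotC : gpoState n f u e ≠ w := by
    intro hcontra
    exact Nat.find_min hP (show e < t by omega) ⟨m + p₂ - 1, hcontra.symm⟩
  have h0k : gpoState n f u k ⟨0, by omega⟩ ≠ w ⟨0, by omega⟩ := by
    intro h
    exact hknotC (st_ext hn _ _ _ hctail hwtail h)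
  have h0e : gpoState n f u e ⟨0, by omega⟩ ≠ w ⟨0, by omega⟩ := by
    intro h
    exact henotC (st_ext hn _ _ _ hetail hwtail h)
  have h0 : gpoState n f u e ⟨0, by omega⟩ = gpoState n f u k ⟨0, by omega⟩ :=
    zmod_ne _ _ _ h0e h0k
  have heqek : gpoState n f u e = gpoState n f u k := st_ext hn _ _ _ hetail hctail h0
  exact no_repeat hn hf hu_even T hT k (by omega) e (by omega) heqek


/-- Let `f` be a standard feedback function whose state graph contains
(at least) two distinct cycles/loops, realized as the disjoint orbits of periodic
points `x₁` and `x₂`.  If the initial state `u` lies on the cycle through `x₁`, then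
the GPO algorithm on `(f,u)` never visits any state of the cycle through `x₂`. -/
theorem gpo_avoids_other_cycles (n : ℕ) (hn : 1 ≤ n)
    (f : (Fin n → ZMod 2) → ZMod 2) (hf : IsStandard n f) (u : Fin n → ZMod 2)
    (x₁ x₂ : Fin n → ZMod 2) (p₁ p₂ : ℕ) (hp₁ : 0 < p₁) (hp₂ : 0 < p₂)
    (hx₁ : (stateMap n f)^[p₁] x₁ = x₁) (hx₂ : (stateMap n f)^[p₂] x₂ = x₂)
    (hu : ∃ m, (stateMap n f)^[m] x₁ = u)
    (hdisj : ∀ y, (∃ m, (stateMap n f)^[m] x₁ = y) →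
      (∃ m, (stateMap n f)^[m] x₂ = y) → False) :
    ∀ y, (∃ m, (stateMap n f)^[m] x₂ = y) → ¬ gpoVisits n f u y := by
  intro y hy hvis
  exact gpo_avoids_other_cycles' n hn f hf u x₁ x₂ p₁ p₂ hp₁ hp₂ hx₁ hx₂ hu hdisj y hy hvis
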